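/- Let α, β be inner functions, k ≥ 1, and φ ∈ L²(𝕋). Then on K_α^∞: U_φ^{α,β} − S_β U_φ^{α,β} (S_α*)^k = k_0^β ⊗ χ + Σ_{j=0}^{k−1} ψ_j ⊗ k_{0,j}^α, where χ = P_α(conj φ), ψ_j = (1/j!) S_β P_β W_k(φ · conj(z)^{k−j}), k_0^β = P_β 1, and k_{0,j}^α = P_α(j! z^j). -/

import Mathlib

open MeasureTheory Complex

noncomputable section

instance : Fact ((0:ℝ) < 1) := ⟨one_pos⟩

/-- The unit circle 𝕋, realized additively. -/
abbrev Circ := AddCircle (1:ℝ)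
/-- Normalized Haar (Lebesgue) measure on the circle. -/
abbrev μc : Measure Circ := AddCircle.haarAddCircle
/-- The Lebesgue space L²(𝕋). -/
abbrev L2 := Lp ℂ 2 μc

/-- The basis element "z^n" of L²(𝕋). -/
def e (n : ℤ) : L2 := fourierLp 2 n

/-- The Hardy space H², the closed span of the nonnegative powers of z. -/
def H2 : Submodule ℂ L2 :=
  (Submodule.span ℂ (Set.range fun n : ℕ => e n)).topologicalClosure

/-- The family θ·z^n, n ≥ 0, whose closed span is (the closure of) θH² for inner θ. -/
def thetaSet (θ : Circ → ℂ) : Set L2 :=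
  {g | ∃ n : ℕ, ⇑g =ᵐ[μc] fun x => θ x * fourier n x}

/-- The model space K_θ = H² ⊖ θH². -/
def Kmodel (θ : Circ → ℂ) : Submodule ℂ L2 :=
  H2 ⊓ (Submodule.span ℂ (thetaSet θ))ᗮ

theorem Kmodel_isClosed (θ : Circ → ℂ) : IsClosed (Kmodel θ : Set L2) := by
  have h1 : IsClosed (H2 : Set L2) := Submodule.isClosed_topologicalClosure _
  have h2 : IsClosed ((Submodule.span ℂ (thetaSet θ))ᗮ : Set L2) :=
    Submodule.isClosed_orthogonal _
  have h3 : (Kmodel θ : Set L2) = (H2 : Set L2) ∩ ((Submodule.span ℂ (thetaSet θ))ᗮ : Set L2) := rfl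
  rw [h3]; exact h1.inter h2

instance (θ : Circ → ℂ) : CompleteSpace (Kmodel θ) :=
  (Kmodel_isClosed θ).completeSpace_coe

instance : CompleteSpace H2 :=
  (Submodule.isClosed_topologicalClosure _).completeSpace_coe

/-- The Riesz projection onto H², as an operator on L². -/
def PH2 : L2 →L[ℂ] L2 := H2.subtypeL.comp H2.orthogonalProjection

/-- The orthogonal projection P_θ onto the model space K_θ, as an operator on L². -/
def Pmod (θ : Circ → ℂ) : L2 →L[ℂ] L2 :=
  (Kmodel θ).subtypeL.comp (Kmodel θ).orthogonalProjection

/-- The rank-one operator (u ⊗ v) f = ⟨f, v⟩ u (inner product linear in f). -/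
def rankOne (u v : L2) : L2 →L[ℂ] L2 :=
  (ContinuousLinearMap.toSpanSingleton ℂ u).comp (innerSL ℂ v)

/-- θ is (the boundary function of) an inner function: essentially bounded, of modulus
one a.e., with vanishing negative Fourier coefficients. -/
def IsInnerFun (θ : Circ → ℂ) : Prop :=
  MemLp θ ⊤ μc ∧ (∀ᵐ x ∂μc, ‖θ x‖ = 1) ∧
    ∀ n : ℤ, n < 0 → ∫ x, θ x * (starRingEnd ℂ) (fourier n x) ∂μc = 0

/-- The kernel functions k_{0,j}^θ = P_θ(j! z^j). -/
def kker (θ : Circ → ℂ) (j : ℕ) : L2 := Pmod θ ((j.factorial : ℂ) • e j)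

/-- The compressed shift S_θ = P_θ M_z P_θ (as an operator on L², vanishing on K_θᗮ),
built from the multiplication-by-z operator Mz. -/
def Smod (θ : Circ → ℂ) (Mz : L2 →L[ℂ] L2) : L2 →L[ℂ] L2 :=
  (Pmod θ).comp (Mz.comp (Pmod θ))

/-- W is the k-th order slant shift W_k : z^n ↦ z^(n/k) if k ∣ n, else 0. -/
def IsSlantShift (k : ℕ) (W : L2 →L[ℂ] L2) : Prop :=
  ∀ n : ℤ, W (e n) = if (k:ℤ) ∣ n then e (n / k) else 0

/-- Mz is the multiplication by z on L². -/
def IsMz (Mz : L2 →L[ℂ] L2) : Prop :=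
  ∀ f : L2, ⇑(Mz f) =ᵐ[μc] fun x => fourier 1 x * f x

/-- U agrees with the compression U_φ^{α,β} = P_β W_k(φ ·) on K_α^∞ = K_α ∩ H^∞. -/
def UphiRel (W : L2 →L[ℂ] L2) (α β : Circ → ℂ) (φ : Circ → ℂ) (U : L2 →L[ℂ] L2) : Prop :=
  ∀ f : L2, f ∈ Kmodel α → MemLp (⇑f) ⊤ μc →
    ∀ g : L2, (⇑g =ᵐ[μc] fun x => φ x * f x) → U f = Pmod β (W g)

/-- U belongs to 𝒮_k(α,β): it is a bounded extension of some U_φ^{α,β}, φ ∈ L². -/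
def InSk (W : L2 →L[ℂ] L2) (α β : Circ → ℂ) (U : L2 →L[ℂ] L2) : Prop :=
  ∃ φ : Circ → ℂ, MemLp φ 2 μc ∧ UphiRel W α β φ U

/-- Sstar acts as the backward shift on H²: S* f = P(conj z · f). -/
def IsBackwardShift (Sstar : L2 →L[ℂ] L2) : Prop :=
  ∀ f : L2, f ∈ H2 → ∀ g : L2,
    (⇑g =ᵐ[μc] fun x => (starRingEnd ℂ) (fourier 1 x) * f x) → Sstar f = PH2 g

/-- C is the conjugation C_θ f = θ · conj(z f) on L². -/
def IsConjOp (θ : Circ → ℂ) (C : L2 → L2) : Prop :=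
  ∀ f : L2, ⇑(C f) =ᵐ[μc] fun x => θ x * (starRingEnd ℂ) (fourier 1 x * f x)

-- Auxiliary development
open scoped InnerProductSpace ComplexConjugate

local notation "⟪" x ", " y "⟫" => @inner ℂ L2 _ x y

/-- Fourier coefficient of u at n. -/
def cf (u : L2) (n : ℤ) : ℂ := ⟪e n, u⟫

lemma cf_eq_repr (u : L2) (n : ℤ) : cf u n = fourierBasis.repr u n := by
  rw [fourierBasis.repr_apply_apply, coe_fourierBasis]; rfl

lemma ext_cf {u v : L2} (h : ∀ n, cf u n = cf v n) : u = v := by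
  have : fourierBasis.repr u = fourierBasis.repr v := by
    ext n; simpa [← cf_eq_repr] using h n
  exact fourierBasis.repr.injective this

lemma cf_integral (u : L2) (n : ℤ) :
    cf u n = ∫ x, conj (fourier n x) * u x ∂μc := by
  rw [cf, MeasureTheory.L2.inner_def]
  refine integral_congr_ae ?_
  filter_upwards [coeFn_fourierLp 2 n] with x hx
  rw [show (e n : Circ → ℂ) x = fourier n x from hx]
  simp [inner, RCLike.inner_apply, mul_comm]

lemma cf_e (m n : ℤ) : cf (e m) n = if m = n then 1 else 0 := by
  have ho : Orthonormal ℂ (fourierBasis (T := 1)) := fourierBasis.orthonormal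
  rw [orthonormal_iff_ite] at ho
  have h := ho n m
  have hn : fourierBasis (T := 1) n = fourierLp 2 n := congrFun coe_fourierBasis n
  have hm : fourierBasis (T := 1) m = fourierLp 2 m := congrFun coe_fourierBasis m
  rw [hn, hm] at h
  rw [cf]
  show @inner ℂ L2 _ (fourierLp 2 n) (fourierLp 2 m) = _
  rw [h]
  simp [eq_comm]

lemma hasSum_cf (u : L2) : HasSum (fun n : ℤ => cf u n • e n) u := by
  have := HilbertBasis.hasSum_repr (fourierBasis (T := 1)) u
  refine this.congr_fun fun n => ?_
  rw [cf_eq_repr]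
  congr 1
  exact (congrFun coe_fourierBasis n).symm

section MzFacts
variable {Mz : L2 →L[ℂ] L2} (hMz : IsMz Mz)

include hMz

lemma cf_Mz (u : L2) (n : ℤ) : cf (Mz u) n = cf u (n - 1) := by
  rw [cf_integral, cf_integral]
  refine integral_congr_ae ?_
  filter_upwards [hMz u] with x hx
  rw [hx]
  have : conj (fourier n x) * (fourier 1 x * u x)
      = (fourier (-n) x * fourier 1 x) * u x := by
    rw [← fourier_neg]; ring
  rw [this, ← fourier_add]
  have : (-n + 1 : ℤ) = -(n-1) := by ring
  rw [this, fourier_neg]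

lemma Mz_e (n : ℤ) : Mz (e n) = e (n + 1) := by
  refine ext_cf fun m => ?_
  rw [cf_Mz hMz, cf_e, cf_e]
  have : n = m - 1 ↔ n + 1 = m := by omega
  simp [this]

lemma MzStar_eq (u v : L2)
    (hv : ⇑v =ᵐ[μc] fun x => conj (fourier 1 x) * u x) :
    ContinuousLinearMap.adjoint Mz u = v := by
  refine ext_inner_left ℂ fun w => ?_
  rw [ContinuousLinearMap.adjoint_inner_right]
  rw [MeasureTheory.L2.inner_def, MeasureTheory.L2.inner_def]
  refine integral_congr_ae ?_
  filter_upwards [hMz w, hv] with x h1 h2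
  rw [h1, h2]
  simp only [RCLike.inner_apply, map_mul]
  ring

lemma cf_MzStar (u : L2) (n : ℤ) :
    cf (ContinuousLinearMap.adjoint Mz u) n = cf u (n + 1) := by
  rw [cf, ContinuousLinearMap.adjoint_inner_right, Mz_e hMz]; rfl

lemma Mz_MzStar (u : L2) : Mz (ContinuousLinearMap.adjoint Mz u) = u := by
  refine ext_cf fun n => ?_
  rw [cf_Mz hMz, cf_MzStar hMz]
  congr 1; ring

end MzFacts

section WFacts
variable {k : ℕ} (hk : 1 ≤ k) {W : L2 →L[ℂ] L2} (hW : IsSlantShift k W)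
include hk hW

lemma cf_W (u : L2) (n : ℤ) : cf (W u) n = cf u ((k : ℤ) * n) := by
  have hk0 : (k : ℤ) ≠ 0 := by exact_mod_cast Nat.one_le_iff_ne_zero.mp hk
  have h1 : HasSum (fun m : ℤ => cf u m • W (e m)) (W u) := by
    simpa using (hasSum_cf u).mapL W
  have h2 : HasSum (fun m : ℤ => @inner ℂ L2 _ (e n) (cf u m • W (e m)))
      (@inner ℂ L2 _ (e n) (W u)) := by
    simpa [inner_smul_right] using h1.mapL (innerSL ℂ (e n))
  have h3 : (fun m : ℤ => @inner ℂ L2 _ (e n) (cf u m • W (e m)))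
      = fun m => if m = (k:ℤ) * n then cf u ((k:ℤ)*n) else 0 := by
    funext m
    rw [inner_smul_right, hW m]
    by_cases hd : (k:ℤ) ∣ m
    · rw [if_pos hd]
      by_cases hm : m = (k:ℤ) * n
      · subst hm
        rw [Int.mul_ediv_cancel_left _ hk0]
        have : @inner ℂ L2 _ (e n) (e n) = cf (e n) n := rfl
        rw [this, cf_e, if_pos rfl, mul_one, if_pos rfl]
      · have : @inner ℂ L2 _ (e n) (e (m / k)) = cf (e (m/k)) n := rfl
        rw [this, cf_e, if_neg, mul_zero, if_neg hm]
        intro hc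
        exact hm (by rw [← hc]; exact (Int.mul_ediv_cancel' hd).symm)
    · rw [if_neg hd, inner_zero_right, mul_zero, if_neg]
      intro hc; exact hd (hc ▸ Dvd.intro n rfl)
  rw [h3] at h2
  have h4 : HasSum (fun m : ℤ => if m = (k:ℤ) * n then cf u ((k:ℤ)*n) else 0)
      (cf u ((k:ℤ)*n)) := hasSum_ite_eq _ _
  exact h2.unique h4 |>.symm ▸ (h4.unique h2)

end WFacts

lemma cf_H2 {u : L2} (hu : u ∈ H2) {n : ℤ} (hn : n < 0) : cf u n = 0 := by
  have hker : (Submodule.span ℂ (Set.range fun n : ℕ => e n)).topologicalClosure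
      ≤ (innerSL ℂ (e n) : L2 →L[ℂ] ℂ).ker := by
    refine Submodule.topologicalClosure_minimal _ ?_ ?_
    · rw [Submodule.span_le]
      rintro _ ⟨m, rfl⟩
      simp only [SetLike.mem_coe, LinearMap.mem_ker]
      show cf (e m) n = 0
      rw [cf_e, if_neg]; omega
    · exact ContinuousLinearMap.isClosed_ker (innerSL ℂ (e n) : L2 →L[ℂ] ℂ)
  exact hker hu

lemma mem_H2_of_cf {u : L2} (hu : ∀ n : ℤ, n < 0 → cf u n = 0) : u ∈ H2 := by
  have hs := hasSum_cf u
  have hmem : ∀ s : Finset ℤ, (∑ n ∈ s, cf u n • e n) ∈ H2 := by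
    intro s
    refine Submodule.sum_mem _ fun n _ => ?_
    by_cases hn : 0 ≤ n
    · refine Submodule.smul_mem _ _ ?_
      refine Submodule.le_topologicalClosure _ ?_
      exact Submodule.subset_span ⟨n.toNat, by simp [hn]⟩
    · rw [hu n (by omega), zero_smul]; exact Submodule.zero_mem _
  have hclosed : IsClosed (H2 : Set L2) := Submodule.isClosed_topologicalClosure _
  exact hclosed.mem_of_tendsto hs (Filter.Eventually.of_forall hmem)

lemma e_mem_H2 {n : ℤ} (hn : 0 ≤ n) : e n ∈ H2 := by
  refine mem_H2_of_cf fun m hm => ?_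
  rw [cf_e, if_neg]; omega

lemma mem_orth_span_iff {S : Set L2} {u : L2} :
    u ∈ (Submodule.span ℂ S)ᗮ ↔ ∀ g ∈ S, @inner ℂ L2 _ g u = 0 := by
  constructor
  · intro hu g hg
    exact hu g (Submodule.subset_span hg)
  · intro h g hg
    induction hg using Submodule.span_induction with
    | mem x hx => exact h x hx
    | zero => simp
    | add x y _ _ hx hy => rw [inner_add_left, hx, hy, add_zero]
    | smul c x _ hx => rw [inner_smul_left, hx, mul_zero]

section PmodFacts
variable (θ : Circ → ℂ)

lemma Pmod_mem (u : L2) : Pmod θ u ∈ Kmodel θ := ((Kmodel θ).orthogonalProjection u).2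

lemma Pmod_eq_self {u : L2} (hu : u ∈ Kmodel θ) : Pmod θ u = u :=
  Submodule.starProjection_eq_self_iff.mpr hu

lemma Pmod_eq_zero {u : L2} (hu : u ∈ (Kmodel θ)ᗮ) : Pmod θ u = 0 := by
  show (((Kmodel θ).orthogonalProjectionOnto u : Kmodel θ) : L2) = 0
  rw [Submodule.orthogonalProjectionOnto_apply_of_mem_orthogonal hu]
  rfl

lemma Pmod_inner (u v : L2) : @inner ℂ L2 _ (Pmod θ u) v = @inner ℂ L2 _ u (Pmod θ v) :=
  Submodule.inner_starProjection_left_eq_right _ u v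

lemma Pmod_idem (u : L2) : Pmod θ (Pmod θ u) = Pmod θ u :=
  Pmod_eq_self θ (Pmod_mem θ u)

lemma Pmod_adjoint : ContinuousLinearMap.adjoint (Pmod θ) = Pmod θ :=
  (isSelfAdjoint_starProjection (Kmodel θ)).adjoint_eq

end PmodFacts

section MzStarCoe
variable {Mz : L2 →L[ℂ] L2} (hMz : IsMz Mz)
include hMz

lemma coe_MzStar (w : L2) :
    ⇑(ContinuousLinearMap.adjoint Mz w) =ᵐ[μc] fun x => conj (fourier 1 x) * w x := by
  have hmeas : AEStronglyMeasurable (fun x => conj (fourier (1:ℤ) x) * w x) μc := by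
    exact (Continuous.aestronglyMeasurable
      (Complex.continuous_conj.comp (map_continuous (fourier (1:ℤ))))).mul
      (Lp.aestronglyMeasurable w)
  have hmem : MemLp (fun x => conj (fourier (1:ℤ) x) * w x) 2 μc := by
    refine MemLp.of_le (Lp.memLp w) hmeas ?_
    refine Filter.Eventually.of_forall fun x => ?_
    rw [norm_mul, RCLike.norm_conj]
    have h1 : ‖fourier (1:ℤ) x‖ = 1 := Circle.norm_coe _
    rw [h1, one_mul]
  have hv : ⇑(hmem.toLp _) =ᵐ[μc] fun x => conj (fourier (1:ℤ) x) * w x := hmem.coeFn_toLp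
  rw [MzStar_eq hMz w _ hv]
  exact hv

lemma coe_MzStar_pow (m : ℕ) (w : L2) :
    ⇑((ContinuousLinearMap.adjoint Mz ^ m) w) =ᵐ[μc]
      fun x => conj (fourier (m : ℤ) x) * w x := by
  induction m with
  | zero =>
    simp only [pow_zero, ContinuousLinearMap.one_apply, Nat.cast_zero, fourier_zero]
    refine Filter.Eventually.of_forall fun x => ?_
    simp
  | succ m ih =>
    rw [pow_succ']
    have h1 := coe_MzStar hMz ((ContinuousLinearMap.adjoint Mz ^ m) w)
    rw [ContinuousLinearMap.mul_apply]
    filter_upwards [h1, ih] with x hx hix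
    rw [hx, hix]
    have : ((m:ℤ) + 1 : ℤ) = (((m+1 : ℕ)):ℤ) := by push_cast; ring
    rw [← this, fourier_add, map_mul]
    ring

lemma cf_MzStar_pow (m : ℕ) (w : L2) (n : ℤ) :
    cf ((ContinuousLinearMap.adjoint Mz ^ m) w) n = cf w (n + m) := by
  induction m generalizing n with
  | zero => simp [pow_zero]
  | succ m ih =>
    rw [pow_succ', ContinuousLinearMap.mul_apply, cf_MzStar hMz, ih]
    congr 1; push_cast; ring

lemma MzStar_pow_e (m : ℕ) : (ContinuousLinearMap.adjoint Mz ^ m) (e m) = e 0 := by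
  refine ext_cf fun n => ?_
  rw [cf_MzStar_pow hMz, cf_e, cf_e]
  have : ((m:ℤ) = n + m) ↔ ((0:ℤ) = n) := by omega
  simp [this]

end MzStarCoe

lemma cf_sub (u v : L2) (n : ℤ) : cf (u - v) n = cf u n - cf v n := inner_sub_right _ _ _
lemma cf_smul (c : ℂ) (u : L2) (n : ℤ) : cf (c • u) n = c * cf u n := inner_smul_right _ _ _

section Core
variable {θ : Circ → ℂ} (hθ : IsInnerFun θ) {Mz : L2 →L[ℂ] L2} (hMz : IsMz Mz)
include hθ hMz

/-- Mz maps thetaSet into thetaSet. -/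
lemma Mz_thetaSet {g : L2} (hg : g ∈ thetaSet θ) : Mz g ∈ thetaSet θ := by
  obtain ⟨n, hn⟩ := hg
  refine ⟨n + 1, ?_⟩
  filter_upwards [hMz g, hn] with x h1 h2
  rw [h1, h2]
  have : ((n:ℤ) + 1 : ℤ) = ((n + 1 : ℕ) : ℤ) := by push_cast; ring
  rw [← this, fourier_add]
  ring

lemma cf_thetaSet_neg {g : L2} (hg : g ∈ thetaSet θ) {n : ℤ} (hn : n < 0) : cf g n = 0 := by
  obtain ⟨m, hm⟩ := hg
  rw [cf_integral]
  have : (∫ x, conj (fourier n x) * g x ∂μc)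
      = ∫ x, θ x * conj (fourier (n - m) x) ∂μc := by
    refine integral_congr_ae ?_
    filter_upwards [hm] with x hx
    rw [hx, ← fourier_neg, ← fourier_neg]
    have : (-(n - m) : ℤ) = -n + m := by ring
    rw [this, fourier_add]
    ring
  rw [this]
  exact hθ.2.2 _ (by omega)

/-- The backward-shift invariance core lemma. -/
lemma bs_mem {v : L2} (hv : v ∈ Kmodel θ) :
    ContinuousLinearMap.adjoint Mz (v - cf v 0 • e 0) ∈ Kmodel θ := by
  rw [Kmodel, Submodule.mem_inf]
  constructor
  · refine mem_H2_of_cf fun n hn => ?_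
    rw [cf_MzStar hMz, cf_sub, cf_smul, cf_e]
    rcases lt_or_eq_of_le (by omega : n + 1 ≤ 0) with h | h
    · rw [cf_H2 hv.1 h, if_neg (by omega), mul_zero, sub_zero]
    · rw [h, if_pos rfl, mul_one, sub_self]
  · rw [mem_orth_span_iff]
    intro g hg
    rw [ContinuousLinearMap.adjoint_inner_right]
    rw [inner_sub_right, inner_smul_right]
    have h1 : @inner ℂ L2 _ (Mz g) v = 0 :=
      (mem_orth_span_iff.mp hv.2) _ (Mz_thetaSet hθ hMz hg)
    have h2 : @inner ℂ L2 _ (Mz g) (e 0) = 0 := by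
      rw [← inner_conj_symm]
      show conj (cf (Mz g) 0) = 0
      rw [cf_Mz hMz, cf_thetaSet_neg hθ hMz hg (by omega : (0:ℤ) - 1 < 0), map_zero]
    rw [h1, h2, mul_zero, sub_zero]

lemma e_neg_one_mem_orth : e (-1) ∈ (Kmodel θ)ᗮ := by
  rw [Submodule.mem_orthogonal]
  intro u hu
  rw [← inner_conj_symm]
  show conj (cf u (-1)) = 0
  rw [cf_H2 hu.1 (by omega), map_zero]

lemma Smod_adjoint_apply {f : L2} (hf : f ∈ Kmodel θ) :
    ContinuousLinearMap.adjoint (Smod θ Mz) f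
      = ContinuousLinearMap.adjoint Mz (f - cf f 0 • e 0) := by
  have hadj : ContinuousLinearMap.adjoint (Smod θ Mz)
      = (Pmod θ).comp ((ContinuousLinearMap.adjoint Mz).comp (Pmod θ)) := by
    rw [Smod, ContinuousLinearMap.adjoint_comp, ContinuousLinearMap.adjoint_comp,
      Pmod_adjoint, ContinuousLinearMap.comp_assoc]
  rw [hadj]
  simp only [ContinuousLinearMap.comp_apply]
  rw [Pmod_eq_self θ hf]
  have hdec : ContinuousLinearMap.adjoint Mz f
      = ContinuousLinearMap.adjoint Mz (f - cf f 0 • e 0) + cf f 0 • e (-1) := by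
    have hMze : ContinuousLinearMap.adjoint Mz (e 0) = e (-1) := by
      refine ext_cf fun n => ?_
      rw [cf_MzStar hMz, cf_e, cf_e]
      have : ((0:ℤ) = n + 1) ↔ ((-1:ℤ) = n) := by omega
      simp [this]
    rw [← hMze, ← _root_.map_smul, ← map_add]
    congr 1
    abel
  rw [hdec, map_add, Pmod_eq_self θ (bs_mem hθ hMz hf), _root_.map_smul,
    Pmod_eq_zero θ (e_neg_one_mem_orth hθ hMz), smul_zero, add_zero]

lemma Smod_adjoint_pow {f : L2} (hf : f ∈ Kmodel θ) (k : ℕ) :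
    (ContinuousLinearMap.adjoint (Smod θ Mz) ^ k) f
      = (ContinuousLinearMap.adjoint Mz ^ k)
          (f - ∑ j ∈ Finset.range k, cf f j • e (j : ℤ))
    ∧ (ContinuousLinearMap.adjoint (Smod θ Mz) ^ k) f ∈ Kmodel θ := by
  induction k with
  | zero => simpa using hf
  | succ k ih =>
    obtain ⟨ihe, ihm⟩ := ih
    rw [pow_succ', ContinuousLinearMap.mul_apply, pow_succ', ContinuousLinearMap.mul_apply]
    rw [Smod_adjoint_apply hθ hMz ihm, ihe]
    have hcf : cf ((ContinuousLinearMap.adjoint Mz ^ k)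
        (f - ∑ j ∈ Finset.range k, cf f j • e (j : ℤ))) 0 = cf f k := by
      rw [cf_MzStar_pow hMz, zero_add, cf_sub]
      have : cf (∑ j ∈ Finset.range k, cf f j • e (j : ℤ)) (k : ℤ) = 0 := by
        rw [cf, inner_sum]
        refine Finset.sum_eq_zero fun j hj => ?_
        rw [inner_smul_right]
        show cf f j * cf (e (j:ℤ)) (k:ℤ) = 0
        rw [cf_e, if_neg, mul_zero]
        have := Finset.mem_range.mp hj
        omega
      rw [this, sub_zero]
    constructor
    · rw [hcf]
      have : (ContinuousLinearMap.adjoint Mz ^ k)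
            (f - ∑ j ∈ Finset.range k, cf f j • e (j : ℤ)) - cf f k • e 0
          = (ContinuousLinearMap.adjoint Mz ^ k)
            (f - ∑ j ∈ Finset.range (k+1), cf f j • e (j : ℤ)) := by
        rw [Finset.sum_range_succ]
        have he0 : (cf f k : ℂ) • (e 0)
            = (ContinuousLinearMap.adjoint Mz ^ k) (cf f k • e (k : ℤ)) := by
          rw [_root_.map_smul, MzStar_pow_e hMz]
        rw [he0, ← map_sub]
        congr 1
        abel
      rw [this]
    · rw [← ihe]
      exact bs_mem hθ hMz ihm

omit hθ in
lemma MzStar_e0 : ContinuousLinearMap.adjoint Mz (e 0) = e (-1) := by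
  refine ext_cf fun n => ?_
  rw [cf_MzStar hMz, cf_e, cf_e]
  have : ((0:ℤ) = n + 1) ↔ ((-1:ℤ) = n) := by omega
  simp [this]

omit hθ in
lemma MzStar_dec (v : L2) : ContinuousLinearMap.adjoint Mz v
    = ContinuousLinearMap.adjoint Mz (v - cf v 0 • e 0) + cf v 0 • e (-1) := by
  rw [← MzStar_e0 hMz, ← _root_.map_smul, ← map_add]
  congr 1
  abel

lemma Pmod_Mz_split (u : L2) :
    Pmod θ (Mz u) = Pmod θ (Mz (Pmod θ u)) + cf u (-1) • Pmod θ (e 0) := by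
  set w := u - Pmod θ u with hw
  have hworth : w ∈ (Kmodel θ)ᗮ := Submodule.sub_starProjection_mem_orthogonal u
  have hX : Mz w - cf w (-1) • e 0 ∈ (Kmodel θ)ᗮ := by
    rw [Submodule.mem_orthogonal]
    intro v hv
    rw [inner_sub_right, inner_smul_right]
    have h1 : @inner ℂ L2 _ (Mz w) v
        = cf v 0 * conj (cf w (-1)) := by
      rw [← ContinuousLinearMap.adjoint_inner_right, MzStar_dec hMz v,
        inner_add_right, inner_smul_right]
      have h10 : @inner ℂ L2 _ w (ContinuousLinearMap.adjoint Mz (v - cf v 0 • e 0)) = 0 := by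
        rw [← inner_conj_symm]
        rw [hworth _ (bs_mem hθ hMz hv), map_zero]
      have h11 : @inner ℂ L2 _ w (e (-1)) = conj (cf w (-1)) := by
        rw [← inner_conj_symm]; rfl
      rw [h10, h11, zero_add]
    have h2 : @inner ℂ L2 _ v (Mz w) = conj (cf v 0 * conj (cf w (-1))) := by
      rw [← inner_conj_symm, h1]
    rw [h2]
    have h3 : @inner ℂ L2 _ v (e 0) = conj (cf v 0) := by
      rw [← inner_conj_symm]; rfl
    rw [h3]
    ring_nf
    rw [map_mul, Complex.conj_conj]
    ring
  have hPX : Pmod θ (Mz w - cf w (-1) • e 0) = 0 := Pmod_eq_zero θ hX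
  have hsplit : Mz u = Mz (Pmod θ u) + (Mz w - cf w (-1) • e 0) + cf w (-1) • e 0 := by
    rw [hw, map_sub]; abel
  have hcfw : cf w (-1) = cf u (-1) := by
    rw [hw, cf_sub, cf_H2 (Pmod_mem θ u).1 (by omega : (-1:ℤ) < 0), sub_zero]
  rw [hsplit, map_add, map_add, hPX, add_zero, _root_.map_smul, hcfw]
end Core

lemma coe_sum {ι : Type*} (s : Finset ι) (F : ι → L2) :
    ⇑(∑ j ∈ s, F j) =ᵐ[μc] fun x => ∑ j ∈ s, F j x := by
  classical
  induction s using Finset.induction_on with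
  | empty =>
    simp only [Finset.sum_empty]
    exact Lp.coeFn_zero _ _ _
  | insert a s' hj ih =>
    rw [Finset.sum_insert hj]
    filter_upwards [Lp.coeFn_add (F a) (∑ j ∈ s', F j), ih] with x h1 h2
    rw [h1]
    simp only [Pi.add_apply, h2, Finset.sum_insert hj]

lemma W_MzStar_pow {k : ℕ} (hk : 1 ≤ k) {W Mz : L2 →L[ℂ] L2}
    (hW : IsSlantShift k W) (hMz : IsMz Mz) (u : L2) :
    W ((ContinuousLinearMap.adjoint Mz ^ k) u)
      = ContinuousLinearMap.adjoint Mz (W u) := by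
  refine ext_cf fun n => ?_
  rw [cf_W hk hW, cf_MzStar_pow hMz, cf_MzStar hMz, cf_W hk hW]
  congr 1; ring

lemma Smod_Pmod_MzStar {θ : Circ → ℂ} (hθ : IsInnerFun θ) {Mz : L2 →L[ℂ] L2}
    (hMz : IsMz Mz) (h : L2) :
    Smod θ Mz (Pmod θ (ContinuousLinearMap.adjoint Mz h))
      = Pmod θ h - cf h 0 • Pmod θ (e 0) := by
  have h1 : Smod θ Mz (Pmod θ (ContinuousLinearMap.adjoint Mz h))
      = Pmod θ (Mz (Pmod θ (ContinuousLinearMap.adjoint Mz h))) := by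
    rw [Smod]
    simp only [ContinuousLinearMap.comp_apply]
    rw [Pmod_idem]
  rw [h1]
  have h2 := Pmod_Mz_split hθ hMz (ContinuousLinearMap.adjoint Mz h)
  have h3 : cf (ContinuousLinearMap.adjoint Mz h) (-1) = cf h 0 := by
    rw [cf_MzStar hMz]; norm_num
  rw [eq_sub_iff_add_eq, ← h3, ← h2, Mz_MzStar hMz]

lemma ae_sum_congr {ι : Type*} (s : Finset ι) (F G : ι → Circ → ℂ)
    (h : ∀ j ∈ s, F j =ᵐ[μc] G j) :
    (fun x => ∑ j ∈ s, F j x) =ᵐ[μc] fun x => ∑ j ∈ s, G j x := by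
  classical
  induction s using Finset.induction_on with
  | empty => simp
  | insert a s' hj ih =>
    have ha := h a (Finset.mem_insert_self a s')
    have hs := ih fun j hjs => h j (Finset.mem_insert_of_mem hjs)
    filter_upwards [ha, hs] with x h1 h2
    rw [Finset.sum_insert hj, Finset.sum_insert hj, h1, h2]

lemma coe_p (u : L2) (k : ℕ) :
    ⇑(∑ j ∈ Finset.range k, cf u j • e (j:ℤ)) =ᵐ[μc]
      fun x => ∑ j ∈ Finset.range k, cf u j * fourier (j:ℤ) x := by
  have h1 := coe_sum (Finset.range k) (fun j => cf u j • e (j:ℤ))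
  refine h1.trans ?_
  refine ae_sum_congr _ _ _ fun j _ => ?_
  filter_upwards [Lp.coeFn_smul (cf u j) (e (j:ℤ)), coeFn_fourierLp 2 (j:ℤ)] with x hx he
  rw [hx]
  simp only [Pi.smul_apply, smul_eq_mul]
  rw [show (e (j:ℤ) : Circ → ℂ) x = fourier (j:ℤ) x from he]

/-- for φ ∈ L², on K_α^∞ one has
U_φ − S_β U_φ (S_α*)^k = k_0^β ⊗ χ + ∑_{j<k} ψ_j ⊗ k_{0,j}^α,
with χ = P_α(conj φ) and ψ_j = (1/j!) S_β P_β W_k(φ·conj(z)^{k-j}). -/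
theorem fundamental_identity (k : ℕ) (hk : 1 ≤ k) (α β : Circ → ℂ)
    (hα : IsInnerFun α) (hβ : IsInnerFun β)
    (W Mz : L2 →L[ℂ] L2) (hW : IsSlantShift k W) (hMz : IsMz Mz)
    (φ : Circ → ℂ) (hφ : MemLp φ 2 μc)
    -- cφ = conj φ as an element of L²
    (cφ : L2) (hcφ : ⇑cφ =ᵐ[μc] fun x => (starRingEnd ℂ) (φ x))
    -- gψ j = φ·conj(z)^{k-j} as an element of L²
    (gψ : ℕ → L2)
    (hgψ : ∀ j ∈ Finset.range k, ⇑(gψ j) =ᵐ[μc]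
      fun x => φ x * (starRingEnd ℂ) (fourier ((k : ℤ) - (j : ℤ)) x))
    (f : L2) (hf : f ∈ Kmodel α) (hfb : MemLp (⇑f) ⊤ μc)
    -- g₁ = φ·f, g₂ = φ·((S_α*)^k f) as elements of L²
    (g₁ : L2) (hg₁ : ⇑g₁ =ᵐ[μc] fun x => φ x * f x)
    (g₂ : L2) (hg₂ : ⇑g₂ =ᵐ[μc]
      fun x => φ x * ((ContinuousLinearMap.adjoint (Smod α Mz) ^ k) f) x) :
    Pmod β (W g₁) - Smod β Mz (Pmod β (W g₂)) =
      (rankOne (kker β 0) (Pmod α cφ) +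
        ∑ j ∈ Finset.range k,
          rankOne (((j.factorial : ℂ))⁻¹ • Smod β Mz (Pmod β (W (gψ j)))) (kker α j)) f := by
  obtain ⟨hpow, -⟩ := Smod_adjoint_pow hα hMz hf k
  -- Step 1: decompose g₂
  have hg₂' : g₂ = (ContinuousLinearMap.adjoint Mz ^ k) g₁
      - ∑ j ∈ Finset.range k, cf f j • gψ j := by
    refine MeasureTheory.Lp.ext ?_
    have hRHS : ⇑((ContinuousLinearMap.adjoint Mz ^ k) g₁
        - ∑ j ∈ Finset.range k, cf f j • gψ j) =ᵐ[μc]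
        fun x => conj (fourier (k:ℤ) x) * (φ x * f x)
          - ∑ j ∈ Finset.range k, cf f j *
              (φ x * conj (fourier ((k:ℤ) - (j:ℤ)) x)) := by
      have h1 := Lp.coeFn_sub ((ContinuousLinearMap.adjoint Mz ^ k) g₁)
        (∑ j ∈ Finset.range k, cf f j • gψ j)
      have h2 := (coe_MzStar_pow hMz k g₁)
      have h3 := coe_sum (Finset.range k) (fun j => cf f j • gψ j)
      have h4 : (fun x => ∑ j ∈ Finset.range k, (cf f j • gψ j) x) =ᵐ[μc]
          fun x => ∑ j ∈ Finset.range k, cf f j *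
            (φ x * conj (fourier ((k:ℤ) - (j:ℤ)) x)) := by
        refine ae_sum_congr _ _ _ fun j hj => ?_
        filter_upwards [Lp.coeFn_smul (cf f j) (gψ j), hgψ j hj] with x hx hg
        rw [hx]
        simp only [Pi.smul_apply, smul_eq_mul]
        rw [hg]
      filter_upwards [h1, h2, h3.trans h4, hg₁] with x hx1 hx2 hx3 hxg1
      rw [hx1]
      simp only [Pi.sub_apply]
      rw [hx2, hx3, hxg1]
    refine (hg₂.trans ?_).trans hRHS.symm
    -- now a pointwise identity
    have h5 : ⇑((ContinuousLinearMap.adjoint (Smod α Mz) ^ k) f) =ᵐ[μc]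
        fun x => conj (fourier (k:ℤ) x) *
          (f x - ∑ j ∈ Finset.range k, cf f j * fourier (j:ℤ) x) := by
      rw [hpow]
      have h6 := coe_MzStar_pow hMz k (f - ∑ j ∈ Finset.range k, cf f j • e (j:ℤ))
      refine h6.trans ?_
      have h7 := Lp.coeFn_sub f (∑ j ∈ Finset.range k, cf f j • e (j:ℤ))
      filter_upwards [h7, coe_p f k] with x hx7 hxp
      rw [hx7]
      simp only [Pi.sub_apply]
      rw [hxp]
    filter_upwards [h5] with x hx5
    rw [hx5]
    have hsum : ∑ j ∈ Finset.range k, cf f j * (φ x * conj (fourier ((k:ℤ) - (j:ℤ)) x))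
        = ∑ j ∈ Finset.range k,
            φ x * (conj (fourier (k:ℤ) x) * (cf f j * fourier (j:ℤ) x)) := by
      refine Finset.sum_congr rfl fun j hj => ?_
      have hjf : conj (fourier ((k:ℤ) - (j:ℤ)) x)
          = conj (fourier (k:ℤ) x) * fourier (j:ℤ) x := by
        rw [← fourier_neg, ← fourier_neg]
        have : (-((k:ℤ) - (j:ℤ)) : ℤ) = -(k:ℤ) + (j:ℤ) := by ring
        rw [this, fourier_add]
      rw [hjf]
      ring
    rw [hsum, ← Finset.mul_sum, ← Finset.mul_sum]
    ring
  -- Step 2: apply W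
  have hW2 : W g₂ = ContinuousLinearMap.adjoint Mz (W g₁)
      - ∑ j ∈ Finset.range k, cf f j • W (gψ j) := by
    rw [hg₂', map_sub, map_sum, W_MzStar_pow hk hW hMz]
    congr 1
    exact Finset.sum_congr rfl fun j _ => by rw [_root_.map_smul]
  -- Step 3: the key projection computation
  have hKey : Smod β Mz (Pmod β (W g₂))
      = Pmod β (W g₁) - cf g₁ 0 • Pmod β (e 0)
        - ∑ j ∈ Finset.range k, cf f j • Smod β Mz (Pmod β (W (gψ j))) := by
    rw [hW2, map_sub, map_sub, map_sum, map_sum]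
    rw [Smod_Pmod_MzStar hβ hMz (W g₁)]
    have hcfW : cf (W g₁) 0 = cf g₁ 0 := by
      rw [cf_W hk hW]
      norm_num
    rw [hcfW]
    congr 1
    exact Finset.sum_congr rfl fun j _ => by rw [_root_.map_smul, _root_.map_smul]
  rw [hKey]
  -- Step 4: expand the RHS
  have hr1 : ∀ (u v w : L2), rankOne u v w = (@inner ℂ L2 _ v w) • u := fun u v w => rfl
  rw [ContinuousLinearMap.add_apply, ContinuousLinearMap.sum_apply]
  rw [hr1]
  have hsc1 : @inner ℂ L2 _ (Pmod α cφ) f = cf g₁ 0 := by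
    rw [Pmod_inner, Pmod_eq_self α hf]
    rw [MeasureTheory.L2.inner_def, cf_integral]
    refine integral_congr_ae ?_
    filter_upwards [hcφ, hg₁] with x h1 h2
    simp only [RCLike.inner_apply]
    rw [h1, h2, Complex.conj_conj, fourier_zero, map_one, one_mul]
    ring
  have hker0 : kker β 0 = Pmod β (e 0) := by
    rw [kker, Nat.factorial_zero, Nat.cast_one, one_smul]
    norm_num
  rw [hsc1, hker0]
  have hterm : ∀ j ∈ Finset.range k,
      rankOne (((j.factorial : ℂ))⁻¹ • Smod β Mz (Pmod β (W (gψ j)))) (kker α j) f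
        = cf f j • Smod β Mz (Pmod β (W (gψ j))) := by
    intro j _
    rw [hr1]
    have hsc2 : @inner ℂ L2 _ (kker α j) f = (j.factorial : ℂ) * cf f j := by
      rw [kker, Pmod_inner, Pmod_eq_self α hf, inner_smul_left, map_natCast]
      rfl
    rw [hsc2, smul_smul]
    congr 1
    have : (j.factorial : ℂ) ≠ 0 := Nat.cast_ne_zero.mpr j.factorial_ne_zero
    field_simp
  rw [Finset.sum_congr rfl hterm]
  abel
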